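/- arXiv:1808.05913 — 4 statements merged into one kernel-verified Lean document; each statement's English description precedes it below -/
import Mathlib

section
/- Let A be an n×n complex matrix and suppose applying the regularizing algorithm (repeatedly splitting off the kernel of the associated semilinear operator) yields ranks of kernels r₁, r₂, …, r_t at each stage, terminating with a nonsingular A_t. Then r₁ ≥ r₂ ≥ … ≥ r_t. -/
open Matrix

/-- `conStep A i` is the matrix whose range is the image of the `i`-th iterate of the
semilinear operator `v ↦ A · conj v` : `conStep A 0 = I`, `conStep A (i+1) = A * conj (conStep A i)`. -/
noncomputable def conStep {n : ℕ} (A : Matrix (Fin n) (Fin n) ℂ) : ℕ → Matrix (Fin n) (Fin n) ℂ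
  | 0 => 1
  | (i + 1) => A * (conStep A i).map (starRingEnd ℂ)

open scoped ComplexOrder in
/-- conjugating a matrix preserves rank. -/
lemma rank_map_star {n : ℕ} (M : Matrix (Fin n) (Fin n) ℂ) :
    (M.map (starRingEnd ℂ)).rank = M.rank := by
  have h : M.map (starRingEnd ℂ) = (Mᵀ)ᴴ := by
    ext i j; simp [conjTranspose_apply]
  rw [h, rank_conjTranspose, rank_transpose]

/-- mulVec of a conjugated matrix. -/
lemma map_star_mulVec {n : ℕ} (M : Matrix (Fin n) (Fin n) ℂ) (v : Fin n → ℂ) :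
    (M.map (starRingEnd ℂ)).mulVec v = star (M.mulVec (star v)) := by
  ext j
  simp only [mulVec, dotProduct, map_apply, Pi.star_apply, star_sum, star_mul',
    Pi.star_apply, star_star]
  simp [mul_comm]

lemma map_star_range_mono {n : ℕ} (M N : Matrix (Fin n) (Fin n) ℂ)
    (h : LinearMap.range M.mulVecLin ≤ LinearMap.range N.mulVecLin) :
    LinearMap.range (M.map (starRingEnd ℂ)).mulVecLin
      ≤ LinearMap.range (N.map (starRingEnd ℂ)).mulVecLin := by
  rintro x ⟨v, rfl⟩
  obtain ⟨w, hw⟩ := h ⟨star v, rfl⟩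
  refine ⟨star w, ?_⟩
  have h1 : (N.map (starRingEnd ℂ)).mulVec (star w) = star (N.mulVec w) := by
    rw [map_star_mulVec, star_star]
  rw [mulVecLin_apply, mulVecLin_apply, h1, map_star_mulVec]
  have hw' : N.mulVec w = M.mulVec (star v) := hw
  rw [hw']

set_option maxHeartbeats 1000000 in
set_option synthInstance.maxHeartbeats 200000 in
/-- rank–nullity for a map restricted to a submodule. -/
lemma finrank_map_add_finrank_inf_ker {n : ℕ} (f : (Fin n → ℂ) →ₗ[ℂ] (Fin n → ℂ))
    (W : Submodule ℂ (Fin n → ℂ)) :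
    Module.finrank ℂ (W.map f) + Module.finrank ℂ ((LinearMap.ker f) ⊓ W : Submodule ℂ (Fin n → ℂ))
      = Module.finrank ℂ W := by
  have h := LinearMap.finrank_range_add_finrank_ker (f.domRestrict W)
  rw [LinearMap.range_domRestrict, LinearMap.ker_domRestrict] at h
  have hker : (LinearMap.ker f).comap W.subtype
      = ((LinearMap.ker f) ⊓ W).comap W.subtype := by
    ext ⟨x, hx⟩
    simp [hx]
  have e : Module.finrank ℂ (((LinearMap.ker f) ⊓ W).comap W.subtype)
      = Module.finrank ℂ ((LinearMap.ker f) ⊓ W : Submodule ℂ (Fin n → ℂ)) :=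
    (Submodule.comapSubtypeEquivOfLe
      (inf_le_right : (LinearMap.ker f) ⊓ W ≤ W)).finrank_eq
  rw [hker, e] at h
  exact h

theorem conStep_range_mono {n : ℕ} (A : Matrix (Fin n) (Fin n) ℂ) (i : ℕ) :
    LinearMap.range (conStep A (i + 1)).mulVecLin ≤ LinearMap.range (conStep A i).mulVecLin := by
  induction i with
  | zero =>
    rw [show conStep A 0 = (1 : Matrix (Fin n) (Fin n) ℂ) from rfl, mulVecLin_one,
      LinearMap.range_id]
    exact le_top
  | succ i ih =>
    have h2 : conStep A (i + 2) = A * (conStep A (i + 1)).map (starRingEnd ℂ) := rfl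
    have h1 : conStep A (i + 1) = A * (conStep A i).map (starRingEnd ℂ) := rfl
    rw [h2, mulVecLin_mul, LinearMap.range_comp]
    rw [show LinearMap.range (conStep A (i + 1)).mulVecLin
        = Submodule.map A.mulVecLin (LinearMap.range ((conStep A i).map (starRingEnd ℂ)).mulVecLin)
      from by rw [h1, mulVecLin_mul, LinearMap.range_comp]]
    exact Submodule.map_mono (map_star_range_mono _ _ ih)

/-- The kernel dimensions `r_i = rank(conStep A (i-1)) - rank(conStep A i)` produced by the
regularizing algorithm are weakly decreasing. -/
theorem regularizing_ranks_antitone {n : ℕ} (A : Matrix (Fin n) (Fin n) ℂ) (i : ℕ) :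
    (conStep A (i + 1)).rank - (conStep A (i + 2)).rank
      ≤ (conStep A i).rank - (conStep A (i + 1)).rank := by
  set g := A.mulVecLin with hg
  set Wc : ℕ → Submodule ℂ (Fin n → ℂ) := fun j =>
    LinearMap.range ((conStep A j).map (starRingEnd ℂ)).mulVecLin with hWc
  have hrank : ∀ j, (conStep A j).rank = Module.finrank ℂ (Wc j) := fun j => by
    rw [← rank_map_star]; rfl
  have hstep : ∀ j, (conStep A (j + 1)).rank = Module.finrank ℂ ((Wc j).map g) := fun j => by
    rw [show conStep A (j + 1) = A * (conStep A j).map (starRingEnd ℂ) from rfl,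
      Matrix.rank, mulVecLin_mul, LinearMap.range_comp]
  have hmono : Wc (i + 1) ≤ Wc i := map_star_range_mono _ _ (conStep_range_mono A i)
  have hd : Module.finrank ℂ ((LinearMap.ker g) ⊓ Wc (i + 1) : Submodule ℂ (Fin n → ℂ))
      ≤ Module.finrank ℂ ((LinearMap.ker g) ⊓ Wc i : Submodule ℂ (Fin n → ℂ)) :=
    Submodule.finrank_mono (inf_le_inf_left _ hmono)
  have e1 := finrank_map_add_finrank_inf_ker g (Wc i)
  have e2 := finrank_map_add_finrank_inf_ker g (Wc (i + 1))
  rw [← hstep, ← hrank] at e1 e2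
  have h12 : i + 1 + 1 = i + 2 := rfl
  rw [h12] at e2
  omega
end

section
/- Statement 1 of the paper: Suppose (A,B) and (Ã,B̃) are mixed equivalent pairs of m×n matrices, written in block forms ([[0_{k×l},0],[X,A₁]], [[B₁',0],[Y,B₁]]) and ([[0_{k×l̃},0],[X̃,Ã₁]], [[B̃₁',0],[Ỹ,B̃₁]]) respectively, where in each pair the bottom block rows of the first matrix are linearly independent and the columns of B₁' (resp. B̃₁') are linearly independent. Then l = l̃ and (A₁,B₁) is mixed equivalent to (Ã₁,B̃₁). -/
open Matrix

/-- Mixed equivalence of pairs of matrices: `(A,B) ~ (A',B')` iff there are invertible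
`S`, `R` with `S A R = A'` and `S B (conj R) = B'`. -/
def MixedEquiv {m n : Type*} [Fintype m] [DecidableEq m] [Fintype n] [DecidableEq n]
    (A B A' B' : Matrix m n ℂ) : Prop :=
  ∃ (S : Matrix m m ℂ) (R : Matrix n n ℂ), IsUnit S ∧ IsUnit R ∧
    S * A * R = A' ∧ S * B * R.map (starRingEnd ℂ) = B'

namespace Paper1Aux

lemma submul_right {a b c o : Type*} [Fintype b] (M : Matrix a b ℂ) (N : Matrix b c ℂ)
    (g : o → c) : (M * N).submatrix id g = M * N.submatrix id g := by
  ext i j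
  simp [Matrix.mul_apply]

lemma unreindex {a b c : Type*} [Fintype a] [DecidableEq a] [Fintype b] [DecidableEq b]
    [Fintype c] [DecidableEq c] {p q : ℕ}
    (S : Matrix a a ℂ) (F : Matrix a b ℂ) (G : Matrix a c ℂ)
    (R : Matrix (Fin p) (Fin q) ℂ) (e₂ : b ≃ Fin p) (e₃ : c ≃ Fin q)
    (h : S * (F.reindex (Equiv.refl a) e₂) * R = G.reindex (Equiv.refl a) e₃) :
    S * F * R.submatrix ⇑e₂ ⇑e₃ = G := by
  have h2 := congrArg (fun M : Matrix a (Fin q) ℂ => M.submatrix (id : a → a) ⇑e₃) h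
  simp only [Matrix.reindex_apply, Equiv.refl_symm, Equiv.coe_refl] at h2
  rw [submul_right] at h2
  simp only [Matrix.submatrix_submatrix, Equiv.symm_comp_self, Function.comp_id,
    Function.id_comp, Matrix.submatrix_id_id] at h2
  have key := Matrix.submatrix_mul_equiv F (R.submatrix ⇑e₂ ⇑e₃) (id : a → a) e₂.symm
    (id : c → c)
  simp only [Matrix.submatrix_submatrix, Equiv.self_comp_symm, Function.comp_id,
    Function.id_comp, Matrix.submatrix_id_id] at key
  rw [← h2, Matrix.mul_assoc, Matrix.mul_assoc, key]

lemma left_cancel {a b c : Type*} [Fintype a] [Fintype b] [DecidableEq a]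
    (S S' : Matrix a a ℂ) (F : Matrix a b ℂ) (RR : Matrix b c ℂ) (G : Matrix a c ℂ)
    (hS'S : S' * S = 1) (h : S * F * RR = G) : S' * G = F * RR := by
  rw [← h]
  simp only [← Matrix.mul_assoc]
  rw [hS'S, Matrix.one_mul]

lemma right_cancel {a b c : Type*} [Fintype a] [Fintype b] [Fintype c] [DecidableEq b]
    (S : Matrix a a ℂ) (F : Matrix a b ℂ) (RR : Matrix b c ℂ) (RR' : Matrix c b ℂ)
    (G : Matrix a c ℂ) (hRR : RR * RR' = 1) (h : S * F * RR = G) : S * F = G * RR' := by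
  rw [← h, Matrix.mul_assoc (S * F), hRR, Matrix.mul_one]

lemma rows_kill {k m' l n' : ℕ} (X : Matrix (Fin m') (Fin l) ℂ)
    (A₁ : Matrix (Fin m') (Fin n') ℂ)
    (hrows : LinearIndependent ℂ (fun i : Fin m' => Sum.elim (X i) (A₁ i)))
    (Q : Matrix (Fin k) (Fin m') ℂ) (h1 : Q * X = 0) (h2 : Q * A₁ = 0) : Q = 0 := by
  ext r i
  have key := Fintype.linearIndependent_iff.mp hrows (fun i => Q r i) ?_ i
  · simpa using key
  · funext s
    cases s with
    | inl j =>
      have h := congrFun (congrFun h1 r) j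
      simp only [Matrix.mul_apply, Matrix.zero_apply] at h
      simpa [Finset.sum_apply] using h
    | inr j =>
      have h := congrFun (congrFun h2 r) j
      simp only [Matrix.mul_apply, Matrix.zero_apply] at h
      simpa [Finset.sum_apply] using h

lemma cols_kill {k l : ℕ} {c : Type*} [Fintype c] (N : Matrix (Fin k) (Fin l) ℂ)
    (hcols : LinearIndependent ℂ fun j : Fin l => fun i => N i j)
    (M : Matrix (Fin l) c ℂ) (h : N * M = 0) : M = 0 := by
  ext j c'
  have key := Fintype.linearIndependent_iff.mp hcols (fun j => M j c') ?_ j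
  · simpa using key
  · funext i
    have h := congrFun (congrFun h i) c'
    simp only [Matrix.mul_apply, Matrix.zero_apply] at h
    simp only [Finset.sum_apply, Pi.smul_apply, smul_eq_mul, Pi.zero_apply]
    rw [← h]
    exact Finset.sum_congr rfl fun x _ => mul_comm _ _

lemma conj_map_eq_zero {a b : Type*} (M : Matrix a b ℂ)
    (h : M.map (starRingEnd ℂ) = 0) : M = 0 := by
  ext i j
  have := congrFun (congrFun h i) j
  simpa using this

lemma toBlocks₂₂_one {a b : Type*} [DecidableEq a] [DecidableEq b] :
    (1 : Matrix (a ⊕ b) (a ⊕ b) ℂ).toBlocks₂₂ = 1 := by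
  rw [← Matrix.fromBlocks_one, Matrix.toBlocks_fromBlocks₂₂]

lemma exists_blocks {a b c d : Type*} (M : Matrix (a ⊕ b) (c ⊕ d) ℂ) :
    ∃ P Q U V, M = fromBlocks P Q U V :=
  ⟨M.toBlocks₁₁, M.toBlocks₁₂, M.toBlocks₂₁, M.toBlocks₂₂,
    (Matrix.fromBlocks_toBlocks M).symm⟩

end Paper1Aux

open Paper1Aux in
/-- Statement 1 of the paper: if two block pairs as in Algorithm 2 are mixed equivalent,
then the sizes of the zero blocks coincide and the residual pairs are mixed equivalent. -/
theorem paper_statement_1 {k m' l n' l' n'' : ℕ} (hn : l' + n'' = l + n')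
    (X : Matrix (Fin m') (Fin l) ℂ) (A₁ : Matrix (Fin m') (Fin n') ℂ)
    (B₁' : Matrix (Fin k) (Fin l) ℂ) (Y : Matrix (Fin m') (Fin l) ℂ)
    (B₁ : Matrix (Fin m') (Fin n') ℂ)
    (X' : Matrix (Fin m') (Fin l') ℂ) (A₁' : Matrix (Fin m') (Fin n'') ℂ)
    (B₂' : Matrix (Fin k) (Fin l') ℂ) (Y' : Matrix (Fin m') (Fin l') ℂ)
    (B₂ : Matrix (Fin m') (Fin n'') ℂ)
    (hrows : LinearIndependent ℂ (fun i : Fin m' => Sum.elim (X i) (A₁ i)))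
    (hrows' : LinearIndependent ℂ (fun i : Fin m' => Sum.elim (X' i) (A₁' i)))
    (hcols : LinearIndependent ℂ fun j : Fin l => fun i => B₁' i j)
    (hcols' : LinearIndependent ℂ fun j : Fin l' => fun i => B₂' i j)
    (hME : MixedEquiv
      ((fromBlocks (0 : Matrix (Fin k) (Fin l) ℂ) 0 X A₁).reindex (Equiv.refl _)
        finSumFinEquiv)
      ((fromBlocks B₁' 0 Y B₁).reindex (Equiv.refl _) finSumFinEquiv)
      ((fromBlocks (0 : Matrix (Fin k) (Fin l') ℂ) 0 X' A₁').reindex (Equiv.refl _)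
        (finSumFinEquiv.trans (finCongr hn)))
      ((fromBlocks B₂' 0 Y' B₂).reindex (Equiv.refl _)
        (finSumFinEquiv.trans (finCongr hn)))) :
    ∃ h : l = l',
      MixedEquiv A₁ B₁
        (A₁'.reindex (Equiv.refl _) (finCongr (by omega)))
        (B₂.reindex (Equiv.refl _) (finCongr (by omega))) := by
  classical
  obtain ⟨S, R, hS, hR, hA, hB⟩ := hME
  obtain ⟨uS, rfl⟩ := hS
  obtain ⟨uR, rfl⟩ := hR
  set φ := starRingEnd ℂ with hφ
  set e₂ : (Fin l ⊕ Fin n') ≃ Fin (l + n') := finSumFinEquiv with he₂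
  set e₃ : (Fin l' ⊕ Fin n'') ≃ Fin (l + n') := finSumFinEquiv.trans (finCongr hn) with he₃
  -- transfer everything to sum-indexed matrices
  have hA2 := unreindex _ _ _ _ e₂ e₃ hA
  have hB2' := unreindex _ _ _ _ e₂ e₃ hB
  rw [Matrix.submatrix_map] at hB2'
  -- two-sided inverses for the transferred R
  have hRR1 : (uR.val.submatrix ⇑e₂ ⇑e₃) *
      ((uR⁻¹).val.submatrix ⇑e₃ ⇑e₂) = 1 := by
    rw [Matrix.submatrix_mul_equiv _ _ _ e₃ _]
    rw [Units.mul_inv]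
    exact Matrix.submatrix_one_equiv _
  have hRR'1 : ((uR⁻¹).val.submatrix ⇑e₃ ⇑e₂) *
      (uR.val.submatrix ⇑e₂ ⇑e₃) = 1 := by
    rw [Matrix.submatrix_mul_equiv _ _ _ e₂ _]
    rw [Units.inv_mul]
    exact Matrix.submatrix_one_equiv _
  -- block decompositions
  obtain ⟨P, Q, U, V, hSdec⟩ :
      ∃ P Q U V, uS.val = fromBlocks P Q U V :=
    exists_blocks _
  obtain ⟨P', Q', U', V', hS'dec⟩ :
      ∃ P Q U V, (uS⁻¹).val = fromBlocks P Q U V :=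
    exists_blocks _
  obtain ⟨R₁, R₂, R₃, R₄, hRRdec⟩ : ∃ R₁ R₂ R₃ R₄,
      (uR.val.submatrix ⇑e₂ ⇑e₃) = fromBlocks R₁ R₂ R₃ R₄ :=
    exists_blocks _
  obtain ⟨R₁', R₂', R₃', R₄', hRR'dec⟩ : ∃ R₁ R₂ R₃ R₄,
      ((uR⁻¹).val.submatrix ⇑e₃ ⇑e₂) = fromBlocks R₁ R₂ R₃ R₄ :=
    exists_blocks _
  rw [hRRdec] at hA2 hB2' hRR1 hRR'1
  rw [hRR'dec] at hRR1 hRR'1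
  -- Q = 0
  have hSF := right_cancel _ _ _ _ _ hRR1 hA2
  rw [hSdec, Matrix.fromBlocks_multiply, Matrix.fromBlocks_multiply] at hSF
  simp only [Matrix.mul_zero, Matrix.zero_mul, zero_add, add_zero] at hSF
  have hQ : Q = 0 := by
    refine rows_kill X A₁ hrows Q ?_ ?_
    · simpa using congrArg Matrix.toBlocks₁₁ hSF
    · simpa using congrArg Matrix.toBlocks₁₂ hSF
  -- Q' = 0
  have hS'G := left_cancel _ _ _ _ _ uS.inv_mul hA2
  rw [hS'dec, Matrix.fromBlocks_multiply, Matrix.fromBlocks_multiply] at hS'G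
  simp only [Matrix.mul_zero, Matrix.zero_mul, zero_add, add_zero] at hS'G
  have hQ' : Q' = 0 := by
    refine rows_kill X' A₁' hrows' Q' ?_ ?_
    · simpa using congrArg Matrix.toBlocks₁₁ hS'G
    · simpa using congrArg Matrix.toBlocks₁₂ hS'G
  subst hQ hQ'
  -- V invertible
  have hSS'1 : uS.val * (uS⁻¹).val = 1 := uS.mul_inv
  have hS'S1 : (uS⁻¹).val * uS.val = 1 := uS.inv_mul
  rw [hSdec, hS'dec, Matrix.fromBlocks_multiply] at hSS'1 hS'S1
  simp only [Matrix.mul_zero, Matrix.zero_mul, zero_add, add_zero] at hSS'1 hS'S1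
  have hVV' : V * V' = 1 := by simpa [toBlocks₂₂_one] using congrArg Matrix.toBlocks₂₂ hSS'1
  have hV'V : V' * V = 1 := by simpa [toBlocks₂₂_one] using congrArg Matrix.toBlocks₂₂ hS'S1
  -- conj inverses
  have hRRc1 : (fromBlocks R₁ R₂ R₃ R₄).map φ * (fromBlocks R₁' R₂' R₃' R₄').map φ = 1 := by
    rw [← Matrix.map_mul, hRR1]
    exact Matrix.map_one φ (map_zero φ) (map_one φ)
  -- R₂' = 0
  have hSFB := right_cancel _ _ _ _ _ hRRc1 hB2'
  rw [hSdec, Matrix.fromBlocks_map, Matrix.fromBlocks_multiply, Matrix.fromBlocks_multiply]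
    at hSFB
  simp only [Matrix.mul_zero, Matrix.zero_mul, zero_add, add_zero, Matrix.map_zero _
    (map_zero φ)] at hSFB
  have hR₂' : R₂' = 0 := by
    refine conj_map_eq_zero _ (cols_kill B₂' hcols' _ ?_)
    have := congrArg Matrix.toBlocks₁₂ hSFB
    simpa using this.symm
  -- R₂ = 0
  have hS'GB := left_cancel _ _ _ _ _ uS.inv_mul hB2'
  rw [hS'dec, Matrix.fromBlocks_map, Matrix.fromBlocks_multiply, Matrix.fromBlocks_multiply]
    at hS'GB
  simp only [Matrix.mul_zero, Matrix.zero_mul, zero_add, add_zero, Matrix.map_zero _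
    (map_zero φ)] at hS'GB
  have hR₂ : R₂ = 0 := by
    refine conj_map_eq_zero _ (cols_kill B₁' hcols _ ?_)
    have := congrArg Matrix.toBlocks₁₂ hS'GB
    simpa using this.symm
  subst hR₂ hR₂'
  -- R₄ is square up to the size identity
  rw [Matrix.fromBlocks_multiply] at hRR1 hRR'1
  simp only [Matrix.mul_zero, Matrix.zero_mul, zero_add, add_zero] at hRR1 hRR'1
  have h44 : R₄ * R₄' = 1 := by simpa [toBlocks₂₂_one] using congrArg Matrix.toBlocks₂₂ hRR1
  have h44' : R₄' * R₄ = 1 := by simpa [toBlocks₂₂_one] using congrArg Matrix.toBlocks₂₂ hRR'1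
  have hcard : n' = n'' := by
    have := Matrix.square_of_invertible R₄ R₄' h44 h44'
    simpa using this
  have hl : l = l' := by omega
  have hnn : n'' = n' := hcard.symm
  -- final equations
  rw [hSdec, Matrix.fromBlocks_multiply, Matrix.fromBlocks_multiply] at hA2
  simp only [Matrix.mul_zero, Matrix.zero_mul, zero_add, add_zero] at hA2
  have hA22 : V * A₁ * R₄ = A₁' := by simpa using congrArg Matrix.toBlocks₂₂ hA2
  rw [hSdec, Matrix.fromBlocks_map, Matrix.fromBlocks_multiply, Matrix.fromBlocks_multiply]
    at hB2'
  simp only [Matrix.mul_zero, Matrix.zero_mul, zero_add, add_zero, Matrix.map_zero _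
    (map_zero φ)] at hB2'
  have hB22 : V * B₁ * R₄.map φ = B₂ := by simpa using congrArg Matrix.toBlocks₂₂ hB2'
  refine ⟨hl, V, R₄.submatrix id ⇑(finCongr hnn).symm, ⟨⟨V, V', hVV', hV'V⟩, rfl⟩, ?_, ?_, ?_⟩
  · refine ⟨⟨R₄.submatrix id ⇑(finCongr hnn).symm, R₄'.submatrix ⇑(finCongr hnn).symm id, ?_, ?_⟩, rfl⟩
    · rw [Matrix.submatrix_mul_equiv _ _ _ (finCongr hnn).symm _, h44, Matrix.submatrix_id_id]
    · have := Matrix.submatrix_mul_equiv R₄' R₄ ⇑(finCongr hnn).symm (Equiv.refl _)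
        ⇑(finCongr hnn).symm
      simp only [Equiv.coe_refl] at this
      rw [this, h44', Matrix.submatrix_one_equiv]
  · show V * A₁ * (R₄.submatrix id ⇑(finCongr hnn).symm) =
      A₁'.submatrix id ⇑(finCongr hnn).symm
    rw [← hA22, submul_right]
  · show V * B₁ * (R₄.submatrix id ⇑(finCongr hnn).symm).map φ =
      B₂.submatrix id ⇑(finCongr hnn).symm
    rw [← Matrix.submatrix_map, ← hB22, submul_right]
end

section
/- If B₁' and B̃₁' are k×l complex matrices with linearly independent columns, and S₁₁ (k×k) and R (invertible n×n) satisfy S₁₁·[B₁' 0] = [B̃₁' 0]·conj(R) (as k×n matrices), with S₁₁ invertible, then R is block lower triangular: R = [[R₁₁,0],[R₂₁,R₂₂]] with R₁₁ of size l×l. -/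
/-!
In the last `n'` columns the left side `S₁₁ · [B₁' 0]` vanishes, while the right side is
`B̃₁'` times the conjugated upper-right block of `R`. Since `B̃₁'` has independent columns, it is
left-cancellable, so that block is zero.
-/

open Matrix

theorem Matrix.eq_zero_of_mul_eq_zero_of_linearIndependent_col {R m n o : Type*} [CommRing R]
    [Fintype n] {B : Matrix m n R} (hB : LinearIndependent R B.col) {X : Matrix n o R}
    (h : B * X = 0) : X = 0 := by
  ext i j
  have hcol : B *ᵥ Xᵀ j = B *ᵥ 0 := by
    ext x
    simpa [mulVec, dotProduct, mul_apply] using congrFun (congrFun h x) j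
  exact congrFun (mulVec_injective_iff.mpr hB hcol) i

theorem Matrix.fromCols_zero_mul {R m n₁ n₂ o₁ o₂ : Type*} [Semiring R] [Fintype n₁] [Fintype n₂]
    (B : Matrix m n₁ R) (N : Matrix (n₁ ⊕ n₂) (o₁ ⊕ o₂) R) :
    fromCols B (0 : Matrix m n₂ R) * N = fromCols (B * N.toBlocks₁₁) (B * N.toBlocks₁₂) := by
  nth_rw 1 [← fromBlocks_toBlocks N]
  rw [fromCols_mul_fromBlocks, Matrix.zero_mul, Matrix.zero_mul, add_zero, add_zero]

theorem R_block_lower_triangular_general {k l n' : ℕ}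
    (B₁' B₂' : Matrix (Fin k) (Fin l) ℂ) (S₁₁ : Matrix (Fin k) (Fin k) ℂ)
    (R : Matrix (Fin l ⊕ Fin n') (Fin l ⊕ Fin n') ℂ)
    (hcols' : LinearIndependent ℂ fun j : Fin l => fun i => B₂' i j)
    (heq : S₁₁ * fromCols B₁' (0 : Matrix (Fin k) (Fin n') ℂ)
      = fromCols B₂' (0 : Matrix (Fin k) (Fin n') ℂ) * R.map (starRingEnd ℂ)) :
    ∀ (i : Fin l) (j : Fin n'), R (Sum.inl i) (Sum.inr j) = 0 := by
  rw [mul_fromCols, fromCols_zero_mul, fromCols_ext_iff, Matrix.mul_zero] at heq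
  have hconj : (R.map (starRingEnd ℂ)).toBlocks₁₂ = 0 :=
    eq_zero_of_mul_eq_zero_of_linearIndependent_col hcols' heq.2.symm
  intro i j
  simpa [toBlocks₁₂] using congrFun (congrFun hconj i) j

/-- If `S₁₁ · [B₁' 0] = [B̃₁' 0] · conj R` with `B₁'`, `B̃₁'` having linearly independent
columns and `S₁₁` invertible, then `R` is block lower triangular. -/
theorem R_block_lower_triangular {k l n' : ℕ}
    (B₁' B₂' : Matrix (Fin k) (Fin l) ℂ) (S₁₁ : Matrix (Fin k) (Fin k) ℂ)
    (R : Matrix (Fin l ⊕ Fin n') (Fin l ⊕ Fin n') ℂ)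
    (hcols : LinearIndependent ℂ fun j : Fin l => fun i => B₁' i j)
    (hcols' : LinearIndependent ℂ fun j : Fin l => fun i => B₂' i j)
    (hS : IsUnit S₁₁) (hR : IsUnit R)
    (heq : S₁₁ * fromCols B₁' (0 : Matrix (Fin k) (Fin n') ℂ)
      = fromCols B₂' (0 : Matrix (Fin k) (Fin n') ℂ) * R.map (starRingEnd ℂ)) :
    ∀ (i : Fin l) (j : Fin n'), R (Sum.inl i) (Sum.inr j) = 0 :=
  R_block_lower_triangular_general B₁' B₂' S₁₁ R hcols' heq
end

section
/- Statement 2 of the paper: one step of the regularizing algorithm for mixed equivalence is additive on direct sums. If (A,B) reduces in one step to (k₁,l₁,(A₁,B₁)) and (Ã,B̃) reduces to (k̃₁,l̃₁,(Ã₁,B̃₁)), then (A,B)⊕(Ã,B̃) reduces in one step to (k₁+k̃₁, l₁+l̃₁, (A₁⊕Ã₁, B₁⊕B̃₁)), up to mixed equivalence by permutation matrices. -/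
open Matrix

/-- `(A,B)` reduces in one step of the regularizing algorithm to the residual pair
`(A₁, B₁)`, with zero block of size `K × L`. -/
def Reduces {K M L N : Type*} [Fintype K] [DecidableEq K] [Fintype M] [DecidableEq M]
    [Fintype L] [DecidableEq L] [Fintype N] [DecidableEq N]
    (A B : Matrix (K ⊕ M) (L ⊕ N) ℂ) (A₁ B₁ : Matrix M N ℂ) : Prop :=
  ∃ (X : Matrix M L ℂ) (B' : Matrix K L ℂ) (Y : Matrix M L ℂ),
    LinearIndependent ℂ (fun i : M => Sum.elim (X i) (A₁ i)) ∧
    (LinearIndependent ℂ fun j : L => fun i => B' i j) ∧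
    MixedEquiv A B (fromBlocks 0 0 X A₁) (fromBlocks B' 0 Y B₁)

/-- Auxiliary: block-diagonal combination of linearly independent families is
linearly independent. -/
lemma li_aux {ι ι' α α' β : Type*} [Fintype ι] [Fintype ι']
    (u : ι → α → ℂ) (v : ι' → α' → ℂ) (w : ι ⊕ ι' → β → ℂ) (φ : α → β) (ψ : α' → β)
    (h1 : ∀ i a, w (.inl i) (φ a) = u i a) (h2 : ∀ i' a, w (.inr i') (φ a) = 0)
    (h3 : ∀ i a', w (.inl i) (ψ a') = 0) (h4 : ∀ i' a', w (.inr i') (ψ a') = v i' a')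
    (hu : LinearIndependent ℂ u) (hv : LinearIndependent ℂ v) :
    LinearIndependent ℂ w := by
  rw [Fintype.linearIndependent_iff] at hu hv ⊢
  intro g hg
  have hsum : ∀ b : β, (∑ i : ι, g (.inl i) • w (.inl i) b) +
      (∑ i' : ι', g (.inr i') • w (.inr i') b) = 0 := by
    intro b
    have := congrFun hg b
    simpa [Fintype.sum_sum_type, Finset.sum_apply] using this
  have hL : ∀ i : ι, g (.inl i) = 0 := by
    apply hu (fun i => g (.inl i))
    funext a
    have := hsum (φ a)
    simp only [smul_eq_mul, h1, h2, mul_zero, Finset.sum_const_zero, add_zero] at this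
    simpa [Finset.sum_apply] using this
  have hR : ∀ i' : ι', g (.inr i') = 0 := by
    apply hv (fun i' => g (.inr i'))
    funext a'
    have := hsum (ψ a')
    simp only [smul_eq_mul, h3, h4, mul_zero, Finset.sum_const_zero, zero_add] at this
    simpa [Finset.sum_apply] using this
  intro i
  cases i with
  | inl i => exact hL i
  | inr i' => exact hR i'

/-- Auxiliary: shuffling a block-diagonal matrix of 2×2 block matrices. -/
lemma shuffle_aux {K M K' M' L N L' N' : Type*}
    (a : Matrix K L ℂ) (b : Matrix K N ℂ) (c : Matrix M L ℂ) (d : Matrix M N ℂ)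
    (a' : Matrix K' L' ℂ) (b' : Matrix K' N' ℂ) (c' : Matrix M' L' ℂ) (d' : Matrix M' N' ℂ) :
    (fromBlocks (fromBlocks a b c d) 0 0 (fromBlocks a' b' c' d')).reindex
        (Equiv.sumSumSumComm K M K' M') (Equiv.sumSumSumComm L N L' N') =
      fromBlocks (fromBlocks a 0 0 a') (fromBlocks b 0 0 b')
        (fromBlocks c 0 0 c') (fromBlocks d 0 0 d') := by
  ext i j
  rcases i with (i | i) | (i | i) <;> rcases j with (j | j) | (j | j) <;>
    simp [Equiv.sumSumSumComm, fromBlocks]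

/-- Statement 2 of the paper: one step of the regularizing algorithm is additive on
direct sums (up to permutation of rows and columns). -/
theorem paper_statement_2 {K M L N K' M' L' N' : Type*}
    [Fintype K] [DecidableEq K] [Fintype M] [DecidableEq M]
    [Fintype L] [DecidableEq L] [Fintype N] [DecidableEq N]
    [Fintype K'] [DecidableEq K'] [Fintype M'] [DecidableEq M']
    [Fintype L'] [DecidableEq L'] [Fintype N'] [DecidableEq N']
    (A B : Matrix (K ⊕ M) (L ⊕ N) ℂ) (A₁ B₁ : Matrix M N ℂ)
    (A' B' : Matrix (K' ⊕ M') (L' ⊕ N') ℂ) (A₁' B₁' : Matrix M' N' ℂ)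
    (h : Reduces A B A₁ B₁) (h' : Reduces A' B' A₁' B₁') :
    Reduces
      ((fromBlocks A 0 0 A').reindex (Equiv.sumSumSumComm K M K' M')
        (Equiv.sumSumSumComm L N L' N'))
      ((fromBlocks B 0 0 B').reindex (Equiv.sumSumSumComm K M K' M')
        (Equiv.sumSumSumComm L N L' N'))
      (fromBlocks A₁ 0 0 A₁') (fromBlocks B₁ 0 0 B₁') := by
  obtain ⟨X, Bd, Y, hX, hBd, S, R, hS, hR, hA, hB⟩ := h
  obtain ⟨X', Bd', Y', hX', hBd', S', R', hS', hR', hA', hB'⟩ := h'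
  set e₁ := Equiv.sumSumSumComm K M K' M' with he₁
  set e₂ := Equiv.sumSumSumComm L N L' N' with he₂
  refine ⟨fromBlocks X 0 0 X', fromBlocks Bd 0 0 Bd', fromBlocks Y 0 0 Y', ?_, ?_, ?_⟩
  · -- linear independence of the rows of [X̂ Â₁]
    apply li_aux (fun i : M => Sum.elim (X i) (A₁ i)) (fun i : M' => Sum.elim (X' i) (A₁' i))
      _ (Sum.map Sum.inl Sum.inl) (Sum.map Sum.inr Sum.inr) ?_ ?_ ?_ ?_ hX hX'
    · rintro i (a | a) <;> simp [fromBlocks]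
    · rintro i (a | a) <;> simp [fromBlocks]
    · rintro i (a | a) <;> simp [fromBlocks]
    · rintro i (a | a) <;> simp [fromBlocks]
  · -- linear independence of the columns of B̂'
    apply li_aux (fun j : L => fun i => Bd i j) (fun j : L' => fun i => Bd' i j)
      _ Sum.inl Sum.inr ?_ ?_ ?_ ?_ hBd hBd'
    · intro j k; simp [fromBlocks]
    · intro j k; simp [fromBlocks]
    · intro j k; simp [fromBlocks]
    · intro j k; simp [fromBlocks]
  · -- the mixed equivalence
    refine ⟨(fromBlocks S 0 0 S').reindex e₁ e₁, (fromBlocks R 0 0 R').reindex e₂ e₂,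
      ?_, ?_, ?_, ?_⟩
    · rw [Matrix.isUnit_iff_isUnit_det, Matrix.reindex_apply,
        Matrix.det_submatrix_equiv_self, Matrix.det_fromBlocks_zero₂₁]
      exact ((Matrix.isUnit_iff_isUnit_det S).mp hS).mul
        ((Matrix.isUnit_iff_isUnit_det S').mp hS')
    · rw [Matrix.isUnit_iff_isUnit_det, Matrix.reindex_apply,
        Matrix.det_submatrix_equiv_self, Matrix.det_fromBlocks_zero₂₁]
      exact ((Matrix.isUnit_iff_isUnit_det R).mp hR).mul
        ((Matrix.isUnit_iff_isUnit_det R').mp hR')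
    · have key : (fromBlocks S 0 0 S') * (fromBlocks A 0 0 A') * (fromBlocks R 0 0 R') =
          fromBlocks (fromBlocks 0 0 X A₁) 0 0 (fromBlocks 0 0 X' A₁') := by
        rw [Matrix.fromBlocks_multiply, Matrix.fromBlocks_multiply]
        simp [hA, hA']
      rw [Matrix.reindex_apply, Matrix.reindex_apply, Matrix.reindex_apply,
        Matrix.submatrix_mul_equiv _ _ _ e₁.symm, Matrix.submatrix_mul_equiv _ _ _ e₂.symm,
        key, ← Matrix.reindex_apply, shuffle_aux]
      simp
    · have hmap : ((fromBlocks R 0 0 R').reindex e₂ e₂).map (starRingEnd ℂ) =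
          (fromBlocks (R.map (starRingEnd ℂ)) 0 0 (R'.map (starRingEnd ℂ))).reindex e₂ e₂ := by
        rw [Matrix.reindex_apply, Matrix.reindex_apply, ← Matrix.submatrix_map,
          Matrix.fromBlocks_map]
        simp
      have key : (fromBlocks S 0 0 S') * (fromBlocks B 0 0 B') *
            (fromBlocks (R.map (starRingEnd ℂ)) 0 0 (R'.map (starRingEnd ℂ))) =
          fromBlocks (fromBlocks Bd 0 Y B₁) 0 0 (fromBlocks Bd' 0 Y' B₁') := by
        rw [Matrix.fromBlocks_multiply, Matrix.fromBlocks_multiply]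
        simp [hB, hB']
      rw [hmap, Matrix.reindex_apply, Matrix.reindex_apply, Matrix.reindex_apply,
        Matrix.submatrix_mul_equiv _ _ _ e₁.symm, Matrix.submatrix_mul_equiv _ _ _ e₂.symm,
        key, ← Matrix.reindex_apply, shuffle_aux]
      simp
end
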